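/- arXiv:1007.0223 — 5 statements merged into one kernel-verified Lean document; each statement's English description precedes it below -/
import Mathlib

section
/- Let R be an associative unital ring and M an artinian left R-module. Then the only Hausdorff linear topology on M is the discrete topology. -/
open Topology

/-- A *linear topology* on a left `R`-module `M`: the module operations are continuous,
and `0` has a neighborhood basis consisting of submodules. -/
def IsLinearTopology' (R M : Type*) [Ring R] [AddCommGroup M] [Module R M]
    [TopologicalSpace M] : Prop :=
  ContinuousAdd M ∧ ContinuousNeg M ∧ (∀ r : R, Continuous fun m : M => r • m) ∧
    ∀ U ∈ nhds (0 : M), ∃ N : Submodule R M, (N : Set M) ∈ nhds (0 : M) ∧ (N : Set M) ⊆ U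

/-- `M` is *linearly compact*: its topology is a Hausdorff linear topology such that every
family of cosets of closed submodules of `M` with the finite intersection property has
nonempty intersection. -/
def IsLinearlyCompact (R M : Type*) [Ring R] [AddCommGroup M] [Module R M]
    [TopologicalSpace M] : Prop :=
  IsLinearTopology' R M ∧ T2Space M ∧
    ∀ 𝒞 : Set (Set M),
      (∀ C ∈ 𝒞, ∃ (N : Submodule R M) (x : M),
        IsClosed (N : Set M) ∧ C = (x + ·) '' (N : Set M)) →
      (∀ 𝒟 ⊆ 𝒞, 𝒟.Finite → (⋂₀ 𝒟).Nonempty) →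
      (⋂₀ 𝒞).Nonempty

/-!
The submodules that are neighbourhoods of `0` are closed under finite intersections, so by
the descending chain condition there is a smallest one. As these submodules form a basis of
neighbourhoods of `0`, the smallest one lies in every neighbourhood of `0` and is therefore
`0` by the Hausdorff property. So `{0}` is open, and by translation every singleton is open.
-/

theorem IsArtinian.exists_submodule_mem_forall_le (R : Type*) {M : Type*} [Ring R]
    [AddCommGroup M] [Module R M] [IsArtinian R M] (l : Filter M) :
    ∃ N : Submodule R M, (N : Set M) ∈ l ∧ ∀ N' : Submodule R M, (N' : Set M) ∈ l → N ≤ N' := by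
  obtain ⟨N, hN, hmin⟩ := IsArtinian.set_has_minimal {N : Submodule R M | (N : Set M) ∈ l}
    ⟨⊤, Filter.univ_mem⟩
  refine ⟨N, hN, fun N' hN' => ?_⟩
  have hinf : N ⊓ N' = N :=
    (inf_le_left.lt_or_eq).resolve_left (hmin _ (Filter.inter_mem hN hN'))
  exact hinf ▸ inf_le_right

theorem singleton_zero_mem_nhds_of_isArtinian (R : Type*) {M : Type*} [Ring R]
    [AddCommGroup M] [Module R M] [IsArtinian R M] [TopologicalSpace M] [T1Space M]
    (hbasis : ∀ U ∈ 𝓝 (0 : M), ∃ N : Submodule R M, (N : Set M) ∈ 𝓝 0 ∧ (N : Set M) ⊆ U) :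
    ({0} : Set M) ∈ 𝓝 0 := by
  obtain ⟨N, hN, hle⟩ := IsArtinian.exists_submodule_mem_forall_le R (𝓝 (0 : M))
  refine Filter.mem_of_superset hN fun x hx => ?_
  by_contra hx0
  obtain ⟨N', hN', hN'x⟩ := hbasis _ (compl_singleton_mem_nhds_iff.2 (Ne.symm hx0))
  exact hN'x (hle N' hN' hx) rfl

/-- On an artinian module, the only Hausdorff linear topology is the discrete topology. -/
theorem artinian_hausdorff_linear_topology_discrete (R M : Type*) [Ring R]
    [AddCommGroup M] [Module R M] [IsArtinian R M] (t : TopologicalSpace M)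
    (hlin : @IsLinearTopology' R M _ _ _ t) (h2 : @T2Space M t) :
    @DiscreteTopology M t := by
  obtain ⟨hadd, hneg, -, hbasis⟩ := hlin
  have : IsTopologicalAddGroup M := {}
  have hzero : ({0} : Set M) ∈ 𝓝 0 := singleton_zero_mem_nhds_of_isArtinian R hbasis
  exact discreteTopology_of_isOpen_singleton_zero <|
    isOpen_iff_mem_nhds.2 fun x hx => (Set.mem_singleton_iff.1 hx) ▸ hzero
end

section
/- Let R be an associative unital ring and M a left R-module that is linearly compact under the discrete topology. Then M does not contain a direct sum of infinitely many nonzero submodules; that is, every independent family of nonzero submodules of M (a family whose sum is direct) is finite. -/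
/-!
If `N₀, N₁, …` were independent and nonzero, pick `0 ≠ xₖ ∈ Nₖ`. The cosets
`(x₀ + ⋯ + xₙ₋₁) + ⨆ k ≥ n, Nₖ` are nested, so linear compactness yields a common point `y`,
an "infinite sum" of the `xₖ`. But `y` lies in a finite sum `N₀ + ⋯ + Nₘ₋₁`, and for
`n ≥ m` comparing the `n`-th and `(n+1)`-st cosets puts `xₙ` into `⨆ k ≠ n, Nₖ`,
contradicting independence.
-/

open Filter

theorem IsLinearlyCompact.exists_forall_sub_mem {R M : Type*} [Ring R] [AddCommGroup M]
    [Module R M] [TopologicalSpace M] (h : IsLinearlyCompact R M) {S : ℕ → Submodule R M}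
    (hS : Antitone S) (hclosed : ∀ n, IsClosed (S n : Set M)) {z : ℕ → M}
    (hz : ∀ n, z (n + 1) - z n ∈ S n) : ∃ y, ∀ n, y - z n ∈ S n := by
  have hz_le : ∀ {n m}, n ≤ m → z m - z n ∈ S n := by
    intro n m hnm
    induction hnm with
    | refl => simp
    | @step m hnm ih =>
      rw [← sub_add_sub_cancel]
      exact add_mem (hS hnm (hz m)) ih
  let C : ℕ → Set M := fun n => (z n + ·) '' S n
  have mem_C : ∀ n y, y ∈ C n ↔ y - z n ∈ S n := fun n y =>
    ⟨by rintro ⟨s, hs, rfl⟩; simpa using hs, fun hy => ⟨y - z n, hy, add_sub_cancel _ _⟩⟩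
  have hcoset : ∀ D ∈ Set.range C, ∃ (P : Submodule R M) (w : M),
      IsClosed (P : Set M) ∧ D = (w + ·) '' (P : Set M) := by
    rintro _ ⟨n, rfl⟩
    exact ⟨S n, z n, hclosed n, rfl⟩
  -- the cosets are nested: `z m` lies in every coset of index `≤ m`
  have hfip : ∀ 𝒟 ⊆ Set.range C, 𝒟.Finite → (⋂₀ 𝒟).Nonempty := by
    intro 𝒟 h𝒟 hfin
    obtain ⟨m, hm⟩ : ∃ m, ∀ D ∈ 𝒟, ∃ n ≤ m, C n = D :=
      ((hfin.eventually_all (l := atTop)).2 fun D hD => by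
        obtain ⟨n, rfl⟩ := h𝒟 hD
        filter_upwards [eventually_ge_atTop n] with m hnm using ⟨n, hnm, rfl⟩).exists
    refine ⟨z m, fun D hD => ?_⟩
    obtain ⟨n, hnm, rfl⟩ := hm D hD
    exact (mem_C n _).2 (hz_le hnm)
  obtain ⟨y, hy⟩ := h.2.2 (Set.range C) hcoset hfip
  exact ⟨y, fun n => (mem_C n y).1 (hy _ ⟨n, rfl⟩)⟩

theorem iSupIndep.eventually_eq_zero_of_forall_sub_sum_mem {R M : Type*} [Ring R]
    [AddCommGroup M] [Module R M] {N : ℕ → Submodule R M} (hind : iSupIndep N) {x : ℕ → M}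
    (hx : ∀ n, x n ∈ N n) {y : M} (hy : ∀ n, y - ∑ k ∈ Finset.range n, x k ∈ ⨆ k ≥ n, N k) :
    ∀ᶠ n in atTop, x n = 0 := by
  obtain ⟨s, hys⟩ := Submodule.mem_iSup_iff_exists_finset.1 (by simpa using hy 0)
  obtain ⟨m, hsm⟩ := s.exists_nat_subset_range
  filter_upwards [eventually_ge_atTop m] with n hmn
  have head_le : ⨆ k ∈ Finset.range n, N k ≤ ⨆ k ≠ n, N k :=
    iSup₂_mono' fun k hk => ⟨k, (Finset.mem_range.1 hk).ne, le_rfl⟩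
  have tail_le : ⨆ k ≥ n + 1, N k ≤ ⨆ k ≠ n, N k :=
    iSup₂_mono' fun k hk => ⟨k, (Nat.lt_of_succ_le hk).ne', le_rfl⟩
  have hy_head : y ∈ ⨆ k ∈ Finset.range n, N k :=
    (biSup_mono fun k hk => Finset.range_subset_range.2 hmn (hsm hk) :
      ⨆ k ∈ s, N k ≤ _) hys
  have hsum_head : ∑ k ∈ Finset.range n, x k ∈ ⨆ k ∈ Finset.range n, N k :=
    Submodule.sum_mem_biSup fun k _ => hx k
  have hx_eq :
      x n = (y - ∑ k ∈ Finset.range n, x k) - (y - ∑ k ∈ Finset.range (n + 1), x k) := by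
    rw [Finset.sum_range_succ]; abel
  have hx_rest : x n ∈ ⨆ k ≠ n, N k := by
    rw [hx_eq]
    exact sub_mem (head_le (sub_mem hy_head hsum_head)) (tail_le (hy (n + 1)))
  exact (Submodule.disjoint_def.1 (hind n)) _ (hx n) hx_rest

/-- A module that is linearly compact in the discrete topology contains no direct sum of
infinitely many nonzero submodules: any independent family of nonzero submodules is finite. -/
theorem discrete_linearlyCompact_no_infinite_direct_sum (R M : Type*) [Ring R]
    [AddCommGroup M] [Module R M] [TopologicalSpace M] [DiscreteTopology M]
    (h : IsLinearlyCompact R M) (ι : Type*) (N : ι → Submodule R M)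
    (hind : iSupIndep N) (hne : ∀ i, N i ≠ ⊥) :
    Finite ι := by
  by_contra hfin
  have : Infinite ι := not_finite_iff_infinite.1 hfin
  let e := Infinite.natEmbedding ι
  choose x hx hx_ne using fun n => Submodule.exists_mem_ne_zero_of_ne_bot (hne (e n))
  let S : ℕ → Submodule R M := fun n => ⨆ k ≥ n, N (e k)
  have hS : Antitone S := fun n m hnm => iSup₂_mono' fun k hk => ⟨k, hnm.trans hk, le_rfl⟩
  let z : ℕ → M := fun n => ∑ k ∈ Finset.range n, x k
  have hz : ∀ n, z (n + 1) - z n ∈ S n := by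
    intro n
    simp only [z, Finset.sum_range_succ, add_sub_cancel_left]
    exact le_iSup₂ (f := fun k (_ : k ≥ n) => N (e k)) n le_rfl (hx n)
  obtain ⟨y, hy⟩ := h.exists_forall_sub_mem hS (fun _ => isClosed_discrete _) hz
  obtain ⟨n, hn⟩ :=
    ((hind.comp e.injective).eventually_eq_zero_of_forall_sub_sum_mem hx hy).exists
  exact hx_ne n hn
end

section
/- Let R be an associative unital ring and M a linearly compact left R-module. The open submodules N of M form an inversely directed system under inclusion, each quotient M/N is a discrete linearly compact R-module, and the canonical map from M to the inverse limit lim← M/N (taken over all open submodules N, with the inverse limit topology) is an isomorphism of topological R-modules. In particular, every linearly compact R-module is an inverse limit of an inversely directed system of discrete linearly compact R-modules. -/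
/-
The quotient of `M` by an open submodule `N` is discrete, so the map into `∏ M ⧸ N` is
an embedding as soon as the open submodules form a basis at `0` with trivial intersection, which
is what a Hausdorff linear topology provides. A compatible family `(x_N)` is hit because the cosets
`x_N + N` are closed and any finitely many of them contain the coset `x_{N₀} + N₀` for `N₀` their
intersection; linear compactness then gives a common point.
-/

open Filter Topology

lemma LinearMap.preimage_image_add_left {R M Q : Type*} [Ring R] [AddCommGroup M] [Module R M]
    [AddCommGroup Q] [Module R Q] (f : M →ₗ[R] Q) (K : Submodule R Q) (x : M) :
    f ⁻¹' ((f x + ·) '' (K : Set Q)) = (x + ·) '' (K.comap f : Set M) := by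
  ext m
  simp [Set.image_add_left, map_add, map_neg]

section Cosets

variable (R : Type*) {M : Type*} [Ring R] [AddCommGroup M] [Module R M] [TopologicalSpace M]

def IsClosedCoset (C : Set M) : Prop :=
  ∃ (N : Submodule R M) (x : M), IsClosed (N : Set M) ∧ C = (x + ·) '' (N : Set M)

variable (M) in
/-- The intersection clause of `IsLinearlyCompact`. -/
def ClosedCosetFamiliesIntersect : Prop :=
  ∀ 𝒞 : Set (Set M), (∀ C ∈ 𝒞, IsClosedCoset R C) →
    (∀ 𝒟 ⊆ 𝒞, 𝒟.Finite → (⋂₀ 𝒟).Nonempty) → (⋂₀ 𝒞).Nonempty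

variable {R}

lemma IsClosedCoset.preimage {Q : Type*} [AddCommGroup Q] [Module R Q] [TopologicalSpace Q]
    {f : M →ₗ[R] Q} (hf : Continuous f) (hs : Function.Surjective f) {C : Set Q}
    (hC : IsClosedCoset R C) : IsClosedCoset R (f ⁻¹' C) := by
  obtain ⟨K, y, hK, rfl⟩ := hC
  obtain ⟨x, rfl⟩ := hs y
  exact ⟨K.comap f, x, hK.preimage hf, f.preimage_image_add_left K x⟩

lemma ClosedCosetFamiliesIntersect.iInter_nonempty (h : ClosedCosetFamiliesIntersect R M)
    {ι : Type*} {C : ι → Set M} (hC : ∀ i, IsClosedCoset R (C i))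
    (hfin : ∀ s : Finset ι, (⋂ i ∈ s, C i).Nonempty) : (⋂ i, C i).Nonempty := by
  rw [← Set.sInter_range]
  refine h _ (Set.forall_mem_range.2 hC) fun 𝒟 h𝒟 h𝒟fin => ?_
  obtain ⟨t, -, ht, rfl⟩ := Set.exists_subset_image_finite_and.1
    ⟨𝒟, Set.image_univ ▸ h𝒟, h𝒟fin, rfl⟩
  simpa [Set.sInter_image] using hfin ht.toFinset

lemma ClosedCosetFamiliesIntersect.of_surjective {Q : Type*} [AddCommGroup Q] [Module R Q]
    [TopologicalSpace Q] (h : ClosedCosetFamiliesIntersect R M) {f : M →ₗ[R] Q}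
    (hf : Continuous f) (hs : Function.Surjective f) : ClosedCosetFamiliesIntersect R Q := by
  intro 𝒞 h𝒞 hfip
  obtain ⟨m, hm⟩ := h.iInter_nonempty (C := fun C : 𝒞 => f ⁻¹' C)
    (fun C => (h𝒞 C C.2).preimage hf hs) fun s => by
      obtain ⟨y, hy⟩ := hfip (Subtype.val '' (s : Set 𝒞)) (by simp) (s.finite_toSet.image _)
      obtain ⟨x, rfl⟩ := hs y
      exact ⟨x, by simpa using hy⟩
  exact ⟨f m, fun C hC => by simpa using Set.mem_iInter.1 hm ⟨C, hC⟩⟩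

end Cosets

section LinearTopology

variable {R M : Type*} [Ring R] [AddCommGroup M] [Module R M] [TopologicalSpace M]

lemma IsLinearTopology'.isTopologicalAddGroup (h : IsLinearTopology' R M) :
    IsTopologicalAddGroup M :=
  have := h.1
  have := h.2.1
  { }

lemma IsLinearTopology'.isLinearTopology (h : IsLinearTopology' R M) : IsLinearTopology R M :=
  isLinearTopology_iff_hasBasis_submodule.2
    ⟨fun U => ⟨h.2.2.2 U, fun ⟨_, hN, hNU⟩ => mem_of_superset hN hNU⟩⟩

lemma isLinearTopology'_of_discreteTopology [DiscreteTopology M] : IsLinearTopology' R M :=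
  ⟨inferInstance, inferInstance, fun _ => continuous_of_discreteTopology,
    fun _ hU => (IsLinearTopology.hasBasis_submodule R).mem_iff.1 hU⟩

lemma IsLinearlyCompact.quotient {N : Submodule R M} (h : IsLinearlyCompact R M)
    [DiscreteTopology (M ⧸ N)] : IsLinearlyCompact R (M ⧸ N) :=
  have := h.1.isTopologicalAddGroup
  ⟨isLinearTopology'_of_discreteTopology, inferInstance,
    ClosedCosetFamiliesIntersect.of_surjective h.2.2 N.continuous_mkQ N.mkQ_surjective⟩

end LinearTopology

abbrev OpenSubmodules (R M : Type*) [Ring R] [AddCommGroup M] [Module R M] [TopologicalSpace M] :=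
  {N : Submodule R M // IsOpen (N : Set M)}

namespace OpenSubmodules

variable {R M : Type*} [Ring R] [AddCommGroup M] [Module R M] [TopologicalSpace M]
  [IsTopologicalAddGroup M]

instance (N : OpenSubmodules R M) : DiscreteTopology (M ⧸ N.1) :=
  QuotientAddGroup.discreteTopology N.2

variable (R M) in
def toQuotients : M →ₗ[R] ∀ N : OpenSubmodules R M, M ⧸ N.1 :=
  LinearMap.pi fun N => N.1.mkQ

lemma isInducing_toQuotients [IsLinearTopology R M] : IsInducing (toQuotients R M) := by
  rw [IsTopologicalAddGroup.isInducing_iff_nhds_zero, nhds_pi, Filter.pi, comap_iInf,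
    (IsLinearTopology.hasBasis_open_submodule R).eq_biInf, iInf_subtype']
  refine iInf_congr fun N => ?_
  rw [nhds_discrete, comap_comap, comap_pure]
  congr 1
  ext m
  simp [toQuotients]

lemma injective_toQuotients [IsLinearTopology R M] [T1Space M] :
    Function.Injective (toQuotients R M) := by
  refine (injective_iff_map_eq_zero _).2 fun m hm => ?_
  have hm' : m ∈ ⋂ (N : Submodule R M) (_ : IsOpen (N : Set M)), (N : Set M) :=
    Set.mem_iInter₂.2 fun N hN => by simpa [toQuotients] using congrFun hm ⟨N, hN⟩
  rwa [← (IsLinearTopology.hasBasis_open_submodule R).ker, ker_nhds] at hm'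

lemma isClosedCoset_mkQ_preimage_singleton (N : OpenSubmodules R M) (y : M ⧸ N.1) :
    IsClosedCoset R (N.1.mkQ ⁻¹' {y}) := by
  obtain ⟨x, rfl⟩ := N.1.mkQ_surjective y
  refine ⟨N.1, x, N.1.toAddSubgroup.isClosed_of_isOpen N.2, ?_⟩
  simpa using N.1.mkQ.preimage_image_add_left ⊥ x

lemma range_toQuotients (h : ClosedCosetFamiliesIntersect R M) :
    Set.range (toQuotients R M) = {f : ∀ N : OpenSubmodules R M, M ⧸ N.1 |
      ∀ (N N' : OpenSubmodules R M) (hNN' : N.1 ≤ N'.1),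
        N.1.mapQ N'.1 LinearMap.id hNN' (f N) = f N'} := by
  ext f
  refine ⟨?_, fun hf => ?_⟩
  · rintro ⟨m, rfl⟩ N N' hNN'
    rfl
  obtain ⟨m, hm⟩ := h.iInter_nonempty (isClosedCoset_mkQ_preimage_singleton · (f _)) fun s => by
    let N₀ : OpenSubmodules R M := ⟨s.inf (·.1), Finset.inf_induction
      (p := fun N : Submodule R M => IsOpen (N : Set M)) (by simp)
      (fun _ h₁ _ h₂ => by simpa using h₁.inter h₂) fun N _ => N.2⟩
    obtain ⟨m, hm⟩ := N₀.1.mkQ_surjective (f N₀)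
    refine ⟨m, Set.mem_iInter₂.2 fun N hN => ?_⟩
    rw [Set.mem_preimage, Set.mem_singleton_iff, ← hf N₀ N (Finset.inf_le hN), ← hm]
    rfl
  exact ⟨m, funext fun N => Set.mem_iInter.1 hm N⟩

end OpenSubmodules

/-- A linearly compact module `M` is the inverse limit of its discrete linearly compact
quotients by open submodules: the open submodules form an inversely directed system, each
quotient `M ⧸ N` is discrete and linearly compact, and the canonical map from `M` into
the product of the quotients is a topological embedding whose range is exactly the inverse
limit (the set of compatible families). -/
theorem linearlyCompact_eq_invLim_discrete_quotients (R M : Type*) [Ring R]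
    [AddCommGroup M] [Module R M] [TopologicalSpace M] (h : IsLinearlyCompact R M) :
    (∀ N₁ N₂ : Submodule R M, IsOpen (N₁ : Set M) → IsOpen (N₂ : Set M) →
      ∃ N₃ : Submodule R M, IsOpen (N₃ : Set M) ∧ N₃ ≤ N₁ ∧ N₃ ≤ N₂) ∧
    (∀ N : Submodule R M, IsOpen (N : Set M) →
      DiscreteTopology (M ⧸ N) ∧ IsLinearlyCompact R (M ⧸ N)) ∧
    Topology.IsEmbedding
      (fun (m : M) (N : {N : Submodule R M // IsOpen (N : Set M)}) =>
        (Submodule.Quotient.mk m : M ⧸ N.1)) ∧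
    Set.range (fun (m : M) (N : {N : Submodule R M // IsOpen (N : Set M)}) =>
        (Submodule.Quotient.mk m : M ⧸ N.1)) =
      {f : ∀ N : {N : Submodule R M // IsOpen (N : Set M)}, M ⧸ N.1 |
        ∀ (N N' : {N : Submodule R M // IsOpen (N : Set M)}) (hNN' : N.1 ≤ N'.1),
          Submodule.mapQ N.1 N'.1 LinearMap.id (fun _ hx => hNN' hx) (f N) = f N'} := by
  have := h.1.isTopologicalAddGroup
  have := h.1.isLinearTopology
  have := h.2.1
  refine ⟨fun N₁ N₂ h₁ h₂ => ⟨N₁ ⊓ N₂, h₁.inter h₂, inf_le_left, inf_le_right⟩,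
    fun N hN => ?_, ⟨OpenSubmodules.isInducing_toQuotients, OpenSubmodules.injective_toQuotients⟩,
    OpenSubmodules.range_toQuotients h.2.2⟩
  have : DiscreteTopology (M ⧸ N) := QuotientAddGroup.discreteTopology hN
  exact ⟨this, h.quotient⟩
end

section
/- Let R be an associative unital ring and M a linearly compact left R-module. Then the sum M₁ + M₂ of any two closed submodules M₁, M₂ of M is a closed submodule of M. -/
/-!
Let `x` lie in the closure of `M₁ + M₂`. In a linear topology the closure of a submodule `S` is
`⋂ (S + N)` over the open submodules `N`, and each `S + N` is open, hence closed. So the cosets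
`x + M₁` and `M₂ + N` are cosets of closed submodules; finitely many of the `M₂ + N` contain a
single `M₂ + K`, which `x + M₁` meets because `x ∈ M₁ + M₂ + K`. Linear compactness yields `y` in
all of them: then `y ∈ ⋂ (M₂ + N) = M₂` and `y ∈ x + M₁`, so `x ∈ M₁ + M₂`.
-/

open Filter Topology

theorem Set.sInter_nonempty_of_subset_insert {α : Type*} {A : Set α} {𝒮 𝒟 : Set (Set α)}
    (h𝒮 : ∀ 𝒟 ⊆ 𝒮, 𝒟.Finite → ∃ S ∈ 𝒮, S ⊆ ⋂₀ 𝒟) (hA : ∀ S ∈ 𝒮, (A ∩ S).Nonempty)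
    (h𝒟 : 𝒟 ⊆ insert A 𝒮) (hfin : 𝒟.Finite) : (⋂₀ 𝒟).Nonempty := by
  obtain ⟨S, hS, hS𝒟⟩ :=
    h𝒮 (𝒟 \ {A}) (Set.sdiff_singleton_subset_iff.2 h𝒟) hfin.sdiff
  obtain ⟨y, hyA, hyS⟩ := hA S hS
  refine ⟨y, fun D hD => ?_⟩
  by_cases hDA : D = A
  · exact hDA ▸ hyA
  · exact hS𝒟 hyS D ⟨hD, hDA⟩

namespace IsLinearTopology'

variable {R M : Type*} [Ring R] [AddCommGroup M] [Module R M] [TopologicalSpace M]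

theorem isTopologicalAddGroup_s9 (h : IsLinearTopology' R M) : IsTopologicalAddGroup M :=
  { toContinuousAdd := h.1, toContinuousNeg := h.2.1 }

theorem isLinearTopology_s9 (h : IsLinearTopology' R M) : IsLinearTopology R M :=
  isLinearTopology_iff_hasBasis_submodule.2
    ⟨fun U => ⟨h.2.2.2 U, fun ⟨_, hN, hNU⟩ => mem_of_superset hN hNU⟩⟩

end IsLinearTopology'

namespace Submodule

variable {R M : Type*} [Ring R] [AddCommGroup M] [Module R M] [TopologicalSpace M]

theorem isClosed_of_mem_nhds_zero [IsTopologicalAddGroup M] {N : Submodule R M}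
    (hN : (N : Set M) ∈ 𝓝 0) : IsClosed (N : Set M) :=
  N.toAddSubgroup.isClosed_of_isOpen (N.toAddSubgroup.isOpen_of_mem_nhds hN)

variable [IsLinearTopology R M]

theorem exists_sup_subset_sInter (S : Submodule R M) {𝒟 : Set (Set M)}
    (h𝒟 : ∀ D ∈ 𝒟, ∃ N : Submodule R M, (N : Set M) ∈ 𝓝 0 ∧ D = ↑(S ⊔ N))
    (hfin : 𝒟.Finite) :
    ∃ K : Submodule R M, (K : Set M) ∈ 𝓝 0 ∧ ↑(S ⊔ K) ⊆ ⋂₀ 𝒟 := by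
  choose N hN hND using h𝒟
  have : Finite 𝒟 := hfin.to_subtype
  obtain ⟨K, hK, hKN⟩ := (IsLinearTopology.hasBasis_submodule R).mem_iff.1
    (iInter_mem.2 fun D : 𝒟 => hN D D.2)
  refine ⟨K, hK, Set.subset_sInter fun D hD => hND D hD ▸ ?_⟩
  exact sup_le_sup_left (fun z hz => Set.mem_iInter.1 (hKN hz) ⟨D, hD⟩) S

theorem mem_closure_iff_forall_mem_sup [IsTopologicalAddGroup M] {S : Submodule R M} {x : M} :
    x ∈ closure (S : Set M) ↔ ∀ N : Submodule R M, (N : Set M) ∈ 𝓝 0 → x ∈ S ⊔ N := by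
  rw [mem_closure_iff_nhds_basis ((IsLinearTopology.hasBasis_submodule R).nhds_of_zero x)]
  refine forall₂_congr fun N _ => ⟨fun ⟨y, hyS, hyx⟩ => ?_, fun hx => ?_⟩
  · exact mem_sup.2 ⟨y, hyS, -(y - x), N.neg_mem hyx, by abel⟩
  · obtain ⟨y, hyS, z, hzN, rfl⟩ := mem_sup.1 hx
    exact ⟨y, hyS, by simpa using N.neg_mem hzN⟩

end Submodule

/-- In a linearly compact module, the sum of two closed submodules is closed. -/
theorem sum_closed_submodules_isClosed (R M : Type*) [Ring R] [AddCommGroup M]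
    [Module R M] [TopologicalSpace M] (h : IsLinearlyCompact R M)
    (M₁ M₂ : Submodule R M) (h₁ : IsClosed (M₁ : Set M)) (h₂ : IsClosed (M₂ : Set M)) :
    IsClosed ((M₁ ⊔ M₂ : Submodule R M) : Set M) := by
  obtain ⟨hlin, -, hlc⟩ := h
  have := hlin.isTopologicalAddGroup_s9
  have := hlin.isLinearTopology_s9
  refine isClosed_of_closure_subset fun x hx => ?_
  set 𝒮 : Set (Set M) := {S | ∃ N : Submodule R M, (N : Set M) ∈ 𝓝 0 ∧ S = ↑(M₂ ⊔ N)}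
  have hcosets : ∀ C ∈ insert ((x + ·) '' (M₁ : Set M)) 𝒮, ∃ (N : Submodule R M) (y : M),
      IsClosed (N : Set M) ∧ C = (y + ·) '' (N : Set M) := by
    rintro C (rfl | ⟨N, hN, rfl⟩)
    · exact ⟨M₁, x, h₁, rfl⟩
    · exact ⟨M₂ ⊔ N, 0, Submodule.isClosed_of_mem_nhds_zero (mem_of_superset hN
        (SetLike.coe_subset_coe.2 le_sup_right)), by simp⟩
  have hmeets : ∀ S ∈ 𝒮, ((x + ·) '' (M₁ : Set M) ∩ S).Nonempty := by
    rintro _ ⟨N, hN, rfl⟩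
    obtain ⟨m, hm, n, hn, hmn⟩ :=
      Submodule.mem_sup.1 (Submodule.mem_closure_iff_forall_mem_sup.1 hx N hN)
    obtain ⟨m₁, hm₁, m₂, hm₂, rfl⟩ := Submodule.mem_sup.1 hm
    refine ⟨m₂ + n, ⟨-m₁, M₁.neg_mem hm₁, show x + -m₁ = m₂ + n by rw [← hmn]; abel⟩, ?_⟩
    exact add_mem (Submodule.mem_sup_left hm₂) (Submodule.mem_sup_right hn)
  have hdirected : ∀ 𝒟 ⊆ 𝒮, 𝒟.Finite → ∃ S ∈ 𝒮, S ⊆ ⋂₀ 𝒟 := fun 𝒟 h𝒟 hfin =>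
    let ⟨K, hK, hK𝒟⟩ := M₂.exists_sup_subset_sInter h𝒟 hfin
    ⟨_, ⟨K, hK, rfl⟩, hK𝒟⟩
  obtain ⟨y, hy⟩ := hlc _ hcosets fun 𝒟 =>
    Set.sInter_nonempty_of_subset_insert hdirected hmeets
  obtain ⟨m₁, hm₁, rfl⟩ := hy _ (Set.mem_insert _ _)
  have hy₂ : x + m₁ ∈ M₂ := h₂.closure_subset <| Submodule.mem_closure_iff_forall_mem_sup.2
    fun N hN => hy _ (Set.mem_insert_of_mem _ ⟨N, hN, rfl⟩)
  simpa using Submodule.sub_mem _ (Submodule.mem_sup_right hy₂) (Submodule.mem_sup_left hm₁)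
end

section
/- Let R be an associative unital ring, M a left R-module, and T′ ⊆ T two Hausdorff linear topologies on M. If M is linearly compact under T, then M is linearly compact under T′, and a submodule of M is closed under T if and only if it is closed under T′. -/
/-! The main point is that a submodule `N` closed for the finer topology `T` is closed for the
coarser Hausdorff linear topology `T'`. For `x` in the `T'`-closure of `N`, the traces
`N ∩ (x + U)` on `N` of the submodule neighborhoods of `x` are cosets of the submodules `N ⊓ U`,
which are `T`-closed because open submodules are closed. They have the finite intersection
property, so linear compactness under `T` gives a common point `y ∈ N`; then `y - x` lies in
every open submodule, hence `y = x` as `T'` is Hausdorff. The converse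
inclusion is trivial, so both topologies have the same cosets of closed submodules, and linear
compactness passes from `T` to `T'`. -/

open Topology Filter

namespace Submodule

variable {R M : Type*} [Ring R] [AddCommGroup M] [Module R M]

theorem inter_image_add_eq_image_add_inf {N U : Submodule R M} {x n : M}
    (hn : n ∈ (N : Set M) ∩ (x + ·) '' U) :
    (N : Set M) ∩ (x + ·) '' U = (n + ·) '' ↑(N ⊓ U) := by
  simp only [Set.image_add_left, coe_inf] at hn ⊢
  obtain ⟨hnN, hnU⟩ := hn
  have hsplit : ∀ y : M, -x + y = (-x + n) + (-n + y) := fun y => by abel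
  ext y
  simp only [Set.mem_inter_iff, Set.mem_preimage, SetLike.mem_coe]
  rw [hsplit y, U.add_mem_iff_right hnU, ← N.add_mem_iff_right (N.neg_mem hnN)]

section

variable [TopologicalSpace M]

theorem eq_zero_of_forall_mem_of_mem_nhds [T1Space M]
    (hbasis : ∀ V ∈ 𝓝 (0 : M), ∃ U : Submodule R M, (U : Set M) ∈ 𝓝 0 ∧ (U : Set M) ⊆ V)
    {z : M} (hz : ∀ U : Submodule R M, (U : Set M) ∈ 𝓝 0 → z ∈ U) : z = 0 := by
  by_contra hne
  obtain ⟨U, hU, hUz⟩ := hbasis _ (isOpen_compl_singleton.mem_nhds (Ne.symm hne))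
  exact hUz (hz U hU) rfl

def traceNhds (N : Submodule R M) (x : M) : Set (Set M) :=
  {C | ∃ U : Submodule R M, (U : Set M) ∈ 𝓝 0 ∧ C = (N : Set M) ∩ (x + ·) '' U}

variable {N : Submodule R M} {x : M}

theorem eq_of_mem_sInter_traceNhds [T1Space M]
    (hbasis : ∀ V ∈ 𝓝 (0 : M), ∃ U : Submodule R M, (U : Set M) ∈ 𝓝 0 ∧ (U : Set M) ⊆ V)
    {y : M} (hy : y ∈ ⋂₀ traceNhds N x) : y ∈ N ∧ y = x := by
  have hy' : ∀ U : Submodule R M, (U : Set M) ∈ 𝓝 0 → y ∈ N ∧ -x + y ∈ U := fun U hU => by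
    simpa only [Set.image_add_left, Set.mem_inter_iff, Set.mem_preimage, SetLike.mem_coe] using
      hy _ ⟨U, hU, rfl⟩
  refine ⟨(hy' ⊤ (by simp)).1, ?_⟩
  exact (neg_add_eq_zero.1 (eq_zero_of_forall_mem_of_mem_nhds hbasis fun U hU => (hy' U hU).2)).symm

variable [ContinuousAdd M]

theorem mem_nhdsWithin_of_mem_traceNhds {C : Set M} (hC : C ∈ traceNhds N x) :
    C ∈ 𝓝[N] x := by
  obtain ⟨U, hU, rfl⟩ := hC
  refine inter_mem_nhdsWithin _ ?_
  simpa using (Homeomorph.addLeft x).isOpenMap.image_mem_nhds hU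

theorem sInter_nonempty_of_mem_closure (hx : x ∈ closure (N : Set M)) {𝒟 : Set (Set M)}
    (h𝒟 : 𝒟 ⊆ traceNhds N x) (hfin : 𝒟.Finite) : (⋂₀ 𝒟).Nonempty :=
  haveI := mem_closure_iff_nhdsWithin_neBot.1 hx
  nonempty_of_mem <| (sInter_mem hfin).2 fun _ hD => mem_nhdsWithin_of_mem_traceNhds (h𝒟 hD)

end

section

-- `T` is bound before the instance, so that unannotated topological notions refer to the latter.
variable {T : TopologicalSpace M} [TopologicalSpace M] [ContinuousAdd M] {N : Submodule R M}

theorem exists_isClosed_coset_of_mem_traceNhds {x : M} (hT : T ≤ ‹TopologicalSpace M›)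
    (hN : IsClosed[T] (N : Set M)) (hx : x ∈ closure (N : Set M)) {C : Set M}
    (hC : C ∈ traceNhds N x) :
    ∃ (P : Submodule R M) (n : M), IsClosed[T] (P : Set M) ∧ C = (n + ·) '' (P : Set M) := by
  have := mem_closure_iff_nhdsWithin_neBot.1 hx
  obtain ⟨n, hn⟩ := nonempty_of_mem (mem_nhdsWithin_of_mem_traceNhds hC)
  obtain ⟨U, hU, rfl⟩ := hC
  have hUclosed : IsClosed (U : Set M) :=
    U.toAddSubgroup.isClosed_of_isOpen (U.toAddSubgroup.isOpen_of_mem_nhds hU)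
  have hNU : IsClosed[T] ((N ⊓ U : Submodule R M) : Set M) :=
    coe_inf (p := N) (q := U) ▸ @IsClosed.inter M _ _ T hN (hUclosed.mono hT)
  exact ⟨N ⊓ U, n, hNU, inter_image_add_eq_image_add_inf hn⟩

theorem isClosed_of_isClosed_finer [T1Space M]
    (hbasis : ∀ V ∈ 𝓝 (0 : M), ∃ U : Submodule R M, (U : Set M) ∈ 𝓝 0 ∧ (U : Set M) ⊆ V)
    (hT : T ≤ ‹TopologicalSpace M›) (hc : @IsLinearlyCompact R M _ _ _ T)
    (hN : IsClosed[T] (N : Set M)) :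
    IsClosed (N : Set M) := by
  refine isClosed_of_closure_subset fun x hx => ?_
  obtain ⟨y, hy⟩ := hc.2.2 (traceNhds N x)
    (fun _ hC => exists_isClosed_coset_of_mem_traceNhds hT hN hx hC)
    (fun _ h𝒟 hfin => sInter_nonempty_of_mem_closure hx h𝒟 hfin)
  obtain ⟨hyN, rfl⟩ := eq_of_mem_sInter_traceNhds hbasis hy
  exact hyN

end

end Submodule

theorem linearlyCompact_of_weaker_topology_general (R M : Type*) [Ring R] [AddCommGroup M]
    [Module R M] (T T' : TopologicalSpace M)
    (hsub : ∀ s : Set M, @IsOpen M T' s → @IsOpen M T s)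
    (hlin' : @IsLinearTopology' R M _ _ _ T') (h2' : @T2Space M T')
    (hc : @IsLinearlyCompact R M _ _ _ T) :
    @IsLinearlyCompact R M _ _ _ T' ∧
      ∀ N : Submodule R M, @IsClosed M T (N : Set M) ↔ @IsClosed M T' (N : Set M) := by
  have hT : T ≤ T' := hsub
  have hclosed (N : Submodule R M) : IsClosed[T] (N : Set M) ↔ IsClosed[T'] (N : Set M) :=
    letI := T'
    haveI := hlin'.1
    ⟨Submodule.isClosed_of_isClosed_finer hlin'.2.2.2 hT hc, fun h => h.mono hT⟩
  refine ⟨⟨hlin', h2', fun 𝒞 h𝒞 hfip => hc.2.2 𝒞 (fun C hC => ?_) hfip⟩, hclosed⟩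
  obtain ⟨N, x, hN, rfl⟩ := h𝒞 C hC
  exact ⟨N, x, (hclosed N).2 hN, rfl⟩

/-- If `T' ⊆ T` are Hausdorff linear topologies on a module `M` and `M` is linearly
compact under `T`, then `M` is linearly compact under `T'` as well, and the same
submodules are closed in the two topologies. -/
theorem linearlyCompact_of_weaker_topology (R M : Type*) [Ring R] [AddCommGroup M]
    [Module R M] (T T' : TopologicalSpace M)
    (hsub : ∀ s : Set M, @IsOpen M T' s → @IsOpen M T s)
    (hlin' : @IsLinearTopology' R M _ _ _ T') (h2' : @T2Space M T')
    (hlin : @IsLinearTopology' R M _ _ _ T) (h2 : @T2Space M T)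
    (hc : @IsLinearlyCompact R M _ _ _ T) :
    @IsLinearlyCompact R M _ _ _ T' ∧
      ∀ N : Submodule R M, @IsClosed M T (N : Set M) ↔ @IsClosed M T' (N : Set M) :=
  linearlyCompact_of_weaker_topology_general R M T T' hsub hlin' h2' hc
end
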